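/- Let χ, ψ be Dirichlet characters and u, v ∈ ℂ. Then for s ∈ ℂ with Re(s) > |Re(u)| + |Re(v)| + 2·max(Re(u),0,Re(v),Re(u+v)) + 1, the identity Σ_{n≥1} σ_{2u}(n,χ) σ_{2v}(n,ψ) n^{−(s+u+v)} = ζ(s+u+v) L(s−u+v,χ) L(s+u−v,ψ) L(s−u−v,χψ) / L(2s,χψ) holds. -/

import Mathlib

/-!
Put `f n = χ(n) n^{2u}` and `g n = ψ(n) n^{2v}`. Both are completely multiplicative and
`σ_{2u}(·, χ) = ζ * f`, so the identity comes from the identity of arithmetic functions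
`(ζ * f) · (ζ * g) = ζ * f * g * fg * S`, where `S(m²) = μ(m) (fg)(m)` and `S` vanishes off the
squares; the L-series of `S` at `s` is `1 / L(2s - 2u - 2v, χψ)`.

Both sides are multiplicative, so it suffices to compare Bell series at each prime `p`. With
`x = f p`, `y = g p`, `a_k = 1 + x + ⋯ + x^k` and `b_k = 1 + y + ⋯ + y^k`, the relation
`a_{k+1} b_{k+1} - xy a_k b_k = a_{k+1} + b_{k+1} - 1` says that `1 - xyT` times the Bell series of
the left side is `1/((1-T)(1-xT)) + 1/((1-T)(1-yT)) - 1/(1-T) = (1 - xyT²)/((1-T)(1-xT)(1-yT))`,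
and this is also `1 - xyT` times the Bell series of the right side.
-/

open Finset

/-- Twisted sum of divisors function. -/
noncomputable def sigmaChar {N : ℕ} (χ : DirichletCharacter ℂ N) (s : ℂ) (n : ℤ) : ℂ :=
  ∑ d ∈ n.natAbs.divisors, χ (d : ZMod N) * (d : ℂ) ^ s

open PowerSeries

namespace PowerSeries

variable {R : Type*} [CommRing R]

theorem coeff_zero_mul_one_sub_C_mul_X (φ : R⟦X⟧) (a : R) :
    coeff 0 (φ * (1 - C a * X)) = coeff 0 φ := by
  simp

theorem coeff_succ_mul_one_sub_C_mul_X (φ : R⟦X⟧) (a : R) (k : ℕ) :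
    coeff (k + 1) (φ * (1 - C a * X)) = coeff (k + 1) φ - a * coeff k φ := by
  simp [mul_sub, ← mul_assoc, coeff_succ_mul_X, mul_comm a]

theorem mk_pow_mul_one_sub_C_mul_X (a : R) : mk (a ^ ·) * (1 - C a * X) = 1 := by
  ext (_ | k)
  · simp
  · simp [coeff_succ_mul_one_sub_C_mul_X, pow_succ', coeff_one]

theorem mk_coeff_mul_coeff_mul_one_sub_C_mul_X {φ ψ : R⟦X⟧} {x y : R}
    (hφ : φ * (1 - C x * X) = mk 1) (hψ : ψ * (1 - C y * X) = mk 1) :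
    mk (fun k ↦ coeff k φ * coeff k ψ) * (1 - C (x * y) * X) = φ + ψ - mk 1 := by
  have h0 (ρ : R⟦X⟧) (a : R) (h : ρ * (1 - C a * X) = mk 1) : coeff 0 ρ = 1 := by
    simpa using congr(coeff 0 $h)
  have hs (ρ : R⟦X⟧) (a : R) (h : ρ * (1 - C a * X) = mk 1) (k : ℕ) :
      coeff (k + 1) ρ = 1 + a * coeff k ρ := by
    have := congr(coeff (k + 1) $h)
    rw [coeff_succ_mul_one_sub_C_mul_X, coeff_mk] at this
    simp only [Pi.one_apply] at this
    linear_combination this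
  ext (_ | k)
  · rw [coeff_zero_mul_one_sub_C_mul_X]
    simp only [coeff_mk, map_sub, map_add, Pi.one_apply, h0 φ x hφ, h0 ψ y hψ]
    ring
  · rw [coeff_succ_mul_one_sub_C_mul_X]
    simp only [coeff_mk, map_sub, map_add, Pi.one_apply, hs φ x hφ, hs ψ y hψ]
    ring

end PowerSeries

theorem Nat.Coprime.isSquare_mul_iff {m n : ℕ} (h : m.Coprime n) :
    IsSquare (m * n) ↔ IsSquare m ∧ IsSquare n := by
  refine ⟨fun ⟨r, hr⟩ ↦ ?_, fun ⟨hm, hn⟩ ↦ hm.mul hn⟩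
  have hsq {a b : ℕ} (hab : a.Coprime b) (hr : a * b = r ^ 2) : IsSquare a := by
    obtain ⟨d, rfl⟩ := exists_eq_pow_of_mul_eq_pow (by simpa [Nat.isUnit_iff]) hr
    exact IsSquare.sq d
  rw [← sq] at hr
  exact ⟨hsq h hr, hsq h.symm (mul_comm m n ▸ hr)⟩

theorem Nat.mul_self_injective : Function.Injective fun m : ℕ ↦ m * m :=
  fun _ _ h ↦ Nat.mul_self_inj.mp h

theorem Nat.Prime.isSquare_pow_iff {p k : ℕ} (hp : p.Prime) : IsSquare (p ^ k) ↔ Even k := by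
  refine ⟨fun ⟨r, hr⟩ ↦ ?_, fun hk ↦ hk.isSquare_pow p⟩
  obtain ⟨i, -, rfl⟩ := (Nat.dvd_prime_pow hp).mp (Dvd.intro r hr.symm)
  rw [← pow_add] at hr
  exact ⟨i, Nat.pow_right_injective hp.two_le hr⟩

namespace ArithmeticFunction
open scoped ArithmeticFunction.zeta ArithmeticFunction.Moebius

variable {R : Type*}

def IsCompletelyMultiplicative [MonoidWithZero R] (f : ArithmeticFunction R) : Prop :=
  f 1 = 1 ∧ ∀ m n, f (m * n) = f m * f n

namespace IsCompletelyMultiplicative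

variable [CommMonoidWithZero R] {f g : ArithmeticFunction R}

theorem isMultiplicative (hf : f.IsCompletelyMultiplicative) : f.IsMultiplicative :=
  ⟨hf.1, fun _ ↦ hf.2 _ _⟩

theorem map_pow (hf : f.IsCompletelyMultiplicative) (n k : ℕ) : f (n ^ k) = f n ^ k := by
  induction k with
  | zero => simp [hf.1]
  | succ k ih => rw [pow_succ, hf.2, ih, pow_succ]

theorem pmul (hf : f.IsCompletelyMultiplicative) (hg : g.IsCompletelyMultiplicative) :
    (f.pmul g).IsCompletelyMultiplicative :=
  ⟨by simp [hf.1, hg.1], fun m n ↦ by simp only [pmul_apply, hf.2, hg.2, mul_mul_mul_comm]⟩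

end IsCompletelyMultiplicative

def onSquares [Zero R] (f : ArithmeticFunction R) : ArithmeticFunction R :=
  ⟨fun n ↦ if IsSquare n then f n.sqrt else 0, by simp⟩

section onSquares

variable [Zero R] (f : ArithmeticFunction R)

@[simp]
theorem onSquares_mul_self (m : ℕ) : onSquares f (m * m) = f m := by
  simp [onSquares, Nat.sqrt_eq]

theorem onSquares_of_not_isSquare {n : ℕ} (h : ¬IsSquare n) : onSquares f n = 0 := by
  simp [onSquares, h]

theorem onSquares_apply_prime_pow {p : ℕ} (hp : p.Prime) (k : ℕ) :
    onSquares f (p ^ k) = if Even k then f (p ^ (k / 2)) else 0 := by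
  split_ifs with hk
  · obtain ⟨j, rfl⟩ := hk
    rw [pow_add, onSquares_mul_self, show (j + j) / 2 = j by omega]
  · exact onSquares_of_not_isSquare f (hp.isSquare_pow_iff.not.mpr hk)

end onSquares

theorem IsMultiplicative.onSquares [MonoidWithZero R] {f : ArithmeticFunction R}
    (hf : f.IsMultiplicative) : (onSquares f).IsMultiplicative := by
  refine ⟨by simpa using (onSquares_mul_self f 1).trans hf.map_one, fun {m n} hmn ↦ ?_⟩
  by_cases hsq : IsSquare m ∧ IsSquare n
  · obtain ⟨⟨a, rfl⟩, ⟨b, rfl⟩⟩ := hsq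
    rw [show a * a * (b * b) = a * b * (a * b) by ring, onSquares_mul_self, onSquares_mul_self,
      onSquares_mul_self]
    exact hf.map_mul_of_coprime
      ((hmn.coprime_dvd_left (dvd_mul_right a a)).coprime_dvd_right (dvd_mul_right b b))
  · rw [onSquares_of_not_isSquare f (mt hmn.isSquare_mul_iff.mp hsq)]
    rcases not_and_or.mp hsq with h | h <;> simp [onSquares_of_not_isSquare f h]

def bellSeries [Semiring R] (p : ℕ) (f : ArithmeticFunction R) : R⟦X⟧ :=
  PowerSeries.mk fun k ↦ f (p ^ k)

@[simp]
theorem coeff_bellSeries [Semiring R] (p k : ℕ) (f : ArithmeticFunction R) :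
    coeff k (bellSeries p f) = f (p ^ k) :=
  coeff_mk _ _

theorem bellSeries_mul [CommSemiring R] {p : ℕ} (hp : p.Prime) (f g : ArithmeticFunction R) :
    bellSeries p (f * g) = bellSeries p f * bellSeries p g := by
  ext k
  rw [coeff_bellSeries, mul_apply, Nat.sum_divisorsAntidiagonal (f · * g ·),
    Nat.sum_divisors_prime_pow hp, coeff_mul,
    Finset.Nat.sum_antidiagonal_eq_sum_range_succ fun i j ↦ coeff i (bellSeries p f) * coeff j _]
  refine Finset.sum_congr rfl fun i hi ↦ ?_
  rw [Nat.pow_div (Nat.lt_succ_iff.mp (Finset.mem_range.mp hi)) hp.pos, coeff_bellSeries,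
    coeff_bellSeries]

theorem IsMultiplicative.eq_of_bellSeries_eq [CommSemiring R] {f g : ArithmeticFunction R}
    (hf : f.IsMultiplicative) (hg : g.IsMultiplicative)
    (h : ∀ p, p.Prime → bellSeries p f = bellSeries p g) : f = g :=
  (eq_iff_eq_on_prime_powers f hf g hg).mpr fun p k hp ↦ by
    simpa using congr(coeff k $(h p hp))

theorem bellSeries_zeta [Semiring R] {p : ℕ} (hp : p ≠ 0) :
    bellSeries p (ζ : ArithmeticFunction R) = PowerSeries.mk 1 := by
  ext k
  simp [hp]

theorem IsCompletelyMultiplicative.bellSeries_mul_one_sub [CommRing R]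
    {f : ArithmeticFunction R} (hf : f.IsCompletelyMultiplicative) (p : ℕ) :
    bellSeries p f * (1 - C (f p) * X) = 1 := by
  have : bellSeries p f = PowerSeries.mk (f p ^ ·) := by
    ext k
    simp [hf.map_pow]
  rw [this, mk_pow_mul_one_sub_C_mul_X]

theorem bellSeries_onSquares_moebius_pmul [CommRing R] {f : ArithmeticFunction R}
    (hf : f.IsCompletelyMultiplicative) {p : ℕ} (hp : p.Prime) :
    bellSeries p (onSquares ((μ : ArithmeticFunction R).pmul f)) = 1 - C (f p) * X ^ 2 := by
  ext k
  rw [coeff_bellSeries, onSquares_apply_prime_pow _ hp, map_sub, coeff_one, coeff_C_mul_X_pow]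
  obtain ⟨j, rfl | rfl⟩ := Nat.even_or_odd' k
  · rcases j with _ | _ | j
    · simp [hf.1]
    · simp [pmul_apply, moebius_apply_prime hp]
    · simp [pmul_apply, moebius_apply_prime_pow hp, show 2 * (j + 2) ≠ 2 by omega]
  · simp [show 2 * j + 1 ≠ 2 by omega]

theorem zeta_mul_pmul_zeta_mul [CommRing R] {f g : ArithmeticFunction R}
    (hf : f.IsCompletelyMultiplicative) (hg : g.IsCompletelyMultiplicative) :
    ((ζ : ArithmeticFunction R) * f).pmul (ζ * g)
      = ζ * f * g * f.pmul g * onSquares ((μ : ArithmeticFunction R).pmul (f.pmul g)) := by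
  have hζ : (ζ : ArithmeticFunction R).IsMultiplicative := isMultiplicative_zeta.natCast
  have hfg := hf.pmul hg
  refine IsMultiplicative.eq_of_bellSeries_eq
    ((hζ.mul hf.isMultiplicative).pmul (hζ.mul hg.isMultiplicative))
    ((((hζ.mul hf.isMultiplicative).mul hg.isMultiplicative).mul hfg.isMultiplicative).mul
      (isMultiplicative_moebius.intCast.pmul hfg.isMultiplicative).onSquares) fun p hp ↦ ?_
  have hF := hf.bellSeries_mul_one_sub p
  have hG := hg.bellSeries_mul_one_sub p
  have hK := hfg.bellSeries_mul_one_sub p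
  have hz := bellSeries_zeta (R := R) hp.ne_zero
  have hL : bellSeries p (((ζ : ArithmeticFunction R) * f).pmul (ζ * g)) * (1 - C (f p * g p) * X)
      = bellSeries p ((ζ : ArithmeticFunction R) * f)
        + bellSeries p ((ζ : ArithmeticFunction R) * g) - PowerSeries.mk 1 := by
    rw [← mk_coeff_mul_coeff_mul_one_sub_C_mul_X]
    · congr 1
      ext k
      simp only [coeff_mk, coeff_bellSeries, pmul_apply]
    · rw [bellSeries_mul hp, mul_assoc, hF, mul_one, hz]
    · rw [bellSeries_mul hp, mul_assoc, hG, mul_one, hz]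
  simp only [bellSeries_mul hp, bellSeries_onSquares_moebius_pmul hfg hp, pmul_apply, hz,
    map_mul] at hK hL ⊢
  -- with `x = f p`, `y = g p`: `1 - xyT² = (1 - xT) + (1 - yT) - (1 - xT)(1 - yT)`
  linear_combination (-bellSeries p ((ζ * f).pmul (ζ * g))) * hK + bellSeries p (f.pmul g) * hL
    + bellSeries p (f.pmul g) * PowerSeries.mk 1 * (-bellSeries p g * hF - bellSeries p f * hG
      + bellSeries p f * (1 - C (f p) * X) * hG + hF)

end ArithmeticFunction

open ArithmeticFunction
open scoped ArithmeticFunction.zeta ArithmeticFunction.Moebius LSeries.notation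

theorem LSeries.term_eq_term_sub_of_eq_mul_cpow {c d : ℕ → ℂ} {w : ℂ}
    (h : ∀ n ≠ 0, d n = c n * (n : ℂ) ^ w) (s : ℂ) : term d s = term c (s - w) := by
  ext n
  rcases eq_or_ne n 0 with rfl | hn
  · simp
  rw [term_of_ne_zero hn, term_of_ne_zero hn, h n hn,
    Complex.cpow_sub _ _ (Nat.cast_ne_zero.mpr hn), div_div_eq_mul_div]

theorem LSeries_eq_tsum_add_one (f : ℕ → ℂ) (s : ℂ) :
    LSeries f s = ∑' n : ℕ, f (n + 1) / ((n : ℂ) + 1) ^ s := by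
  rw [LSeries, ← tsum_pnat_eq_tsum_of_eq_zero (LSeries.term_zero f s), tsum_pnat_eq_tsum_succ]
  exact tsum_congr fun n ↦ by rw [LSeries.term_of_ne_zero n.succ_ne_zero, Nat.cast_succ]

namespace ArithmeticFunction

variable (f : ArithmeticFunction ℂ) (s : ℂ)

theorem term_onSquares_mul_self (m : ℕ) :
    LSeries.term ↗(onSquares f) s (m * m) = LSeries.term ↗f (2 * s) m := by
  rcases eq_or_ne m 0 with rfl | hm
  · simp
  have hm' : (m : ℂ) ≠ 0 := Nat.cast_ne_zero.mpr hm
  rw [LSeries.term_of_ne_zero (mul_ne_zero hm hm), LSeries.term_of_ne_zero hm, onSquares_mul_self,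
    Nat.cast_mul, Complex.natCast_mul_natCast_cpow, two_mul, Complex.cpow_add _ _ hm']

theorem term_onSquares_of_not_mem_range {n : ℕ} (hn : n ∉ Set.range fun m : ℕ ↦ m * m) :
    LSeries.term ↗(onSquares f) s n = 0 := by
  rcases eq_or_ne n 0 with rfl | h0
  · simp
  rw [LSeries.term_of_ne_zero h0, onSquares_of_not_isSquare f fun ⟨r, hr⟩ ↦ hn ⟨r, hr.symm⟩,
    zero_div]

theorem LSeriesSummable_onSquares_iff :
    LSeriesSummable ↗(onSquares f) s ↔ LSeriesSummable ↗f (2 * s) := by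
  rw [LSeriesSummable,
    ← Nat.mul_self_injective.summable_iff fun _ ↦ term_onSquares_of_not_mem_range f s]
  exact summable_congr (term_onSquares_mul_self f s)

theorem LSeries_onSquares : LSeries ↗(onSquares f) s = LSeries ↗f (2 * s) := by
  rw [LSeries, ← Nat.mul_self_injective.tsum_eq fun n hn ↦ by_contra fun h ↦ hn
    (term_onSquares_of_not_mem_range f s h)]
  exact tsum_congr (term_onSquares_mul_self f s)

end ArithmeticFunction

namespace DirichletCharacter

variable {N : ℕ} (χ ψ : DirichletCharacter ℂ N)

noncomputable def mulCpow (w : ℂ) : ArithmeticFunction ℂ :=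
  ⟨fun n ↦ if n = 0 then 0 else χ n * (n : ℂ) ^ w, if_pos rfl⟩

theorem mulCpow_apply (w : ℂ) {n : ℕ} (hn : n ≠ 0) : χ.mulCpow w n = χ n * (n : ℂ) ^ w :=
  if_neg hn

theorem isCompletelyMultiplicative_mulCpow (w : ℂ) :
    (χ.mulCpow w).IsCompletelyMultiplicative := by
  refine ⟨by simp [mulCpow_apply], fun m n ↦ ?_⟩
  rcases eq_or_ne m 0 with rfl | hm
  · simp [mulCpow]
  rcases eq_or_ne n 0 with rfl | hn
  · simp [mulCpow]
  rw [mulCpow_apply χ w (mul_ne_zero hm hn), mulCpow_apply χ w hm, mulCpow_apply χ w hn,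
    Nat.cast_mul, map_mul, Nat.cast_mul, Complex.natCast_mul_natCast_cpow]
  ring

theorem mulCpow_pmul_mulCpow (a b : ℂ) :
    (χ.mulCpow a).pmul (ψ.mulCpow b) = (χ * ψ).mulCpow (a + b) := by
  ext n
  rcases eq_or_ne n 0 with rfl | hn
  · simp
  have hn' : (n : ℂ) ≠ 0 := Nat.cast_ne_zero.mpr hn
  rw [pmul_apply, mulCpow_apply _ _ hn, mulCpow_apply _ _ hn, mulCpow_apply _ _ hn,
    MulChar.mul_apply, Complex.cpow_add _ _ hn']
  ring

variable {χ} {w s : ℂ}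

theorem term_mulCpow (s : ℂ) : LSeries.term ↗(χ.mulCpow w) s = LSeries.term ↗χ (s - w) :=
  LSeries.term_eq_term_sub_of_eq_mul_cpow (fun _ hn ↦ χ.mulCpow_apply w hn) s

theorem term_moebius_pmul_mulCpow (s : ℂ) :
    LSeries.term ↗((μ : ArithmeticFunction ℂ).pmul (χ.mulCpow w)) s
      = LSeries.term (↗χ * ↗μ) (s - w) :=
  LSeries.term_eq_term_sub_of_eq_mul_cpow (fun n hn ↦ by
    rw [pmul_apply, mulCpow_apply χ w hn, intCoe_apply, Pi.mul_apply]
    ring) s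

theorem LSeriesSummable_mulCpow (h : 1 < (s - w).re) : LSeriesSummable ↗(χ.mulCpow w) s := by
  rw [LSeriesSummable, term_mulCpow]
  exact χ.LSeriesSummable_of_one_lt_re h

theorem LSeries_mulCpow [NeZero N] (h : 1 < (s - w).re) :
    LSeries ↗(χ.mulCpow w) s = LFunction χ (s - w) := by
  rw [LSeries, term_mulCpow, ← LSeries, LFunction_eq_LSeries χ h]

theorem LSeriesSummable_onSquares_moebius_pmul_mulCpow (h : 1 < (2 * s - w).re) :
    LSeriesSummable ↗(onSquares ((μ : ArithmeticFunction ℂ).pmul (χ.mulCpow w))) s := by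
  rw [LSeriesSummable_onSquares_iff, LSeriesSummable, term_moebius_pmul_mulCpow]
  exact χ.LSeriesSummable_mul (LSeriesSummable_moebius_iff.mpr h)

theorem LSeries_onSquares_moebius_pmul_mulCpow_mul_LFunction [NeZero N]
    (h : 1 < (2 * s - w).re) :
    LSeries ↗(onSquares ((μ : ArithmeticFunction ℂ).pmul (χ.mulCpow w))) s
      * LFunction χ (2 * s - w) = 1 := by
  rw [LSeries_onSquares, LSeries, term_moebius_pmul_mulCpow, ← LSeries, LFunction_eq_LSeries χ h,
    mul_comm]
  exact LSeries.mul_mu_eq_one χ h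

theorem LSeries_zeta_mul_mulCpow_pmul {N : ℕ} [NeZero N]
    (χ ψ : DirichletCharacter ℂ N) {a b s : ℂ} (h₁ : 1 < s.re) (h₂ : 1 < (s - a).re)
    (h₃ : 1 < (s - b).re) (h₄ : 1 < (s - a - b).re) :
    LSeries ↗(((ζ : ArithmeticFunction ℂ) * χ.mulCpow a).pmul (ζ * ψ.mulCpow b)) s
      = riemannZeta s * LFunction χ (s - a) * LFunction ψ (s - b) * LFunction (χ * ψ) (s - a - b)
          / LFunction (χ * ψ) (2 * s - a - b) := by
  simp only [sub_sub] at h₄ ⊢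
  have h₅ : 1 < (2 * s - (a + b)).re := by
    simp only [Complex.sub_re, Complex.add_re, Complex.mul_re, Complex.re_ofNat,
      Complex.im_ofNat, zero_mul, sub_zero] at h₄ ⊢
    linarith
  have hζ : LSeriesSummable ↗(ζ : ArithmeticFunction ℂ) s := by
    simpa only [natCoe_apply] using LSeriesSummable_zeta_iff.mpr h₁
  have hζL : LSeries ↗(ζ : ArithmeticFunction ℂ) s = riemannZeta s := by
    simpa only [natCoe_apply] using LSeries_zeta_eq_riemannZeta h₁
  have hχ := LSeriesSummable_mulCpow (χ := χ) h₂
  have hψ := LSeriesSummable_mulCpow (χ := ψ) h₃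
  have hχψ := LSeriesSummable_mulCpow (χ := χ * ψ) h₄
  have h₁₂ := ArithmeticFunction.LSeriesSummable_mul hζ hχ
  have h₁₂₃ := ArithmeticFunction.LSeriesSummable_mul h₁₂ hψ
  have hS := LSeriesSummable_onSquares_moebius_pmul_mulCpow (χ := χ * ψ) h₅
  have hinv := LSeries_onSquares_moebius_pmul_mulCpow_mul_LFunction (χ := χ * ψ) h₅
  rw [zeta_mul_pmul_zeta_mul (χ.isCompletelyMultiplicative_mulCpow a)
      (ψ.isCompletelyMultiplicative_mulCpow b), mulCpow_pmul_mulCpow,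
    LSeries_mul' (ArithmeticFunction.LSeriesSummable_mul h₁₂₃ hχψ) hS, LSeries_mul' h₁₂₃ hχψ,
    LSeries_mul' h₁₂ hψ, LSeries_mul' hζ hχ, hζL,
    LSeries_mulCpow h₂, LSeries_mulCpow h₃,
    LSeries_mulCpow h₄, eq_div_iff (right_ne_zero_of_mul_eq_one hinv)]
  linear_combination (riemannZeta s * LFunction χ (s - a) * LFunction ψ (s - b)
    * LFunction (χ * ψ) (s - (a + b))) * hinv

end DirichletCharacter

theorem sigmaChar_eq_zeta_mul_mulCpow {N : ℕ} (χ : DirichletCharacter ℂ N) (w : ℂ) (n : ℤ) :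
    sigmaChar χ w n = ((ζ : ArithmeticFunction ℂ) * χ.mulCpow w) n.natAbs := by
  rw [sigmaChar, coe_zeta_mul_apply]
  exact sum_congr rfl fun d hd ↦ (χ.mulCpow_apply w (Nat.pos_of_mem_divisors hd).ne').symm

/-- Specialization of the character-twisted Ramanujan identity used for the Mellin
transform of the constant term `C_{i∞}(y)`. -/
theorem ramanujan_identity_specialized {N : ℕ} [NeZero N] (χ ψ : DirichletCharacter ℂ N)
    (u v s : ℂ)
    (hs : |u.re| + |v.re| + 2 * max (max u.re 0) (max v.re (u + v).re) + 1 < s.re) :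
    ∑' n : ℕ, sigmaChar χ (2 * u) ((n : ℤ) + 1) * sigmaChar ψ (2 * v) ((n : ℤ) + 1)
        / ((n : ℂ) + 1) ^ (s + u + v)
      = riemannZeta (s + u + v) * DirichletCharacter.LFunction χ (s - u + v)
          * DirichletCharacter.LFunction ψ (s + u - v)
          * DirichletCharacter.LFunction (χ * ψ) (s - u - v)
          / DirichletCharacter.LFunction (χ * ψ) (2 * s) := by
  have hM : 0 ≤ max (max u.re 0) (max v.re (u + v).re) := le_max_of_le_left (le_max_right _ _)
  have hu := abs_le.mp (le_refl |u.re|)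
  have hv := abs_le.mp (le_refl |v.re|)
  have hre (z : ℂ) : (2 * z).re = 2 * z.re := by simp
  have key := DirichletCharacter.LSeries_zeta_mul_mulCpow_pmul χ ψ (s := s + u + v)
    (a := 2 * u) (b := 2 * v) (by simp only [Complex.add_re]; linarith)
    (by simp only [Complex.add_re, Complex.sub_re, hre]; linarith)
    (by simp only [Complex.add_re, Complex.sub_re, hre]; linarith)
    (by simp only [Complex.add_re, Complex.sub_re, hre]; linarith)
  rw [show s + u + v - 2 * u = s - u + v by ring, show s + u + v - 2 * v = s + u - v by ring,
    show s - u + v - 2 * v = s - u - v by ring,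
    show 2 * (s + u + v) - 2 * u - 2 * v = 2 * s by ring, LSeries_eq_tsum_add_one] at key
  rw [← key]
  refine tsum_congr fun n ↦ ?_
  rw [pmul_apply, sigmaChar_eq_zeta_mul_mulCpow, sigmaChar_eq_zeta_mul_mulCpow]
  rfl
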